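/- arXiv:1110.3817 — 2 statements merged into one kernel-verified Lean document; each statement's English description precedes it below -/
import Mathlib

section
/- For all integers n ≥ 1 and k ≥ 1 and every real number α, the sum over all k-even set partitions π of {1,…,nk} of α^{#π} · ∏_{b ∈ π} (#b − 1)! equals [(nk)!/n!] · (α/k)^{↑n}. (Equivalently, (1/(nk)!) ∑_{π ∈ P_{[nk]:k}} α^{#π} Γ(π) = (α/k)^{↑n}/n!, where Γ(π) := ∏_{b∈π} Γ(#b).) -/
/-- The rising factorial `x^{↑n} = x(x+1)⋯(x+n−1)`. -/
def risingFactorial (x : ℝ) (n : ℕ) : ℝ := ∏ i ∈ Finset.range n, (x + i)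

/-- A set partition is even of order `k` (`k`-even) if every block size is divisible
by `k`. -/
def IsEven {N : ℕ} (k : ℕ) (π : Finpartition (Finset.univ : Finset (Fin N))) : Prop :=
  ∀ b ∈ π.parts, k ∣ b.card

instance {N k : ℕ} (π : Finpartition (Finset.univ : Finset (Fin N))) :
    Decidable (IsEven k π) := by unfold IsEven; infer_instance

/-!
Sorting the partitions of an `N`-element set by the block containing a fixed element shows that
the weighted count `T N = ∑_π ∏_{b ∈ π} w(#b)` satisfies
`T N = ∑_{c < N} C(N-1, c) w(c+1) T(N-1-c)`. For `w d = [k ∣ d] α (d-1)!` only blocks of size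
`jk` contribute, and the closed form `(mk)!/m! · (α/k)^{↑m}` satisfies this recursion because
`x ∑_{i<m} x^{↑i}/i! = m x^{↑m}/m!`.
-/

open Finset Nat

namespace Finpartition

lemma heq_of_parts_eq {α : Type*} [Lattice α] [OrderBot α] {a b : α} (hab : a = b)
    {P : Finpartition a} {Q : Finpartition b} (h : P.parts = Q.parts) : HEq P Q := by
  subst hab
  exact heq_of_eq (Finpartition.ext h)

variable {β : Type*} [DecidableEq β] {s t : Finset β}

lemma parts_avoid_of_mem (P : Finpartition s) (ht : t ∈ P.parts) :
    (P.avoid t).parts = P.parts.erase t := by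
  ext c
  rw [mem_avoid, mem_erase]
  constructor
  · rintro ⟨d, hd, hdt, rfl⟩
    have hne : d ≠ t := by rintro rfl; exact hdt le_rfl
    have hdt' : Disjoint d t := P.disjoint hd ht hne
    rw [hdt'.sdiff_eq_left]
    exact ⟨hne, hd⟩
  · rintro ⟨hne, hc⟩
    have hct : Disjoint c t := P.disjoint hc ht hne
    refine ⟨c, hc, fun hle => hne ?_, hct.sdiff_eq_left⟩
    obtain ⟨x, hx⟩ := P.nonempty_of_mem_parts hc
    exact P.eq_of_mem_parts hc ht hx (hle hx)

lemma sum_prod_parts_empty {R : Type*} [CommSemiring R] (f : Finset β → R) :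
    ∑ P : Finpartition (∅ : Finset β), ∏ b ∈ P.parts, f b = 1 := by
  have : Unique (Finpartition (∅ : Finset β)) := inferInstanceAs (Unique (Finpartition ⊥))
  rw [Fintype.sum_unique, parts_eq_empty_iff.2 rfl, prod_empty]

def avoidPart (P : Finpartition s) {a : β} (ha : a ∈ s) :
    Finpartition (s \ insert a ((P.part a).erase a)) :=
  (P.avoid (P.part a)).copy (by rw [insert_erase (P.mem_part ha)])

lemma avoidPart_parts (P : Finpartition s) {a : β} (ha : a ∈ s) :
    (P.avoidPart ha).parts = P.parts.erase (P.part a) :=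
  parts_avoid_of_mem P (P.part_mem.2 ha)

/-- Splitting off the part containing `a` identifies partitions of `s` with pairs of a set
`u ⊆ s \ {a}` (the rest of that part) and a partition of `s \ insert a u`. -/
theorem sum_prod_parts_eq_sum_powerset {R : Type*} [CommSemiring R] (f : Finset β → R)
    {a : β} (ha : a ∈ s) :
    ∑ P : Finpartition s, ∏ b ∈ P.parts, f b =
      ∑ u ∈ (s.erase a).powerset,
        f (insert a u) * ∑ Q : Finpartition (s \ insert a u), ∏ b ∈ Q.parts, f b := by
  simp_rw [mul_sum]
  rw [sum_sigma']
  symm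
  refine sum_bij'
    (fun p hp => (p.2.extend (b := insert a p.1) (insert_ne_empty _ _) sdiff_disjoint
      (sdiff_sup_cancel (insert_subset ha
        ((mem_powerset.1 (mem_sigma.1 hp).1).trans (erase_subset _ _)))) : Finpartition s))
    (fun P _ => ⟨(P.part a).erase a, P.avoidPart ha⟩)
    (fun _ _ => mem_univ _)
    (fun P _ => mem_sigma.2
      ⟨mem_powerset.2 (erase_subset_erase _ (P.part_subset a)), mem_univ _⟩)
    ?_ ?_ ?_
  · rintro ⟨u, Q⟩ hp
    have hau : a ∉ u := fun h => (mem_erase.1 (mem_powerset.1 (mem_sigma.1 hp).1 h)).1 rfl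
    have hQ : insert a u ∉ Q.parts := fun h => by simpa using Q.le h (mem_insert_self a u)
    suffices ∀ P : Finpartition s, P.parts = insert (insert a u) Q.parts →
        (⟨(P.part a).erase a, P.avoidPart ha⟩ : Σ v, Finpartition (s \ insert a v)) = ⟨u, Q⟩
      from this _ rfl
    intro P hP
    have hpart : P.part a = insert a u :=
      P.part_eq_of_mem (hP ▸ mem_insert_self _ _) (mem_insert_self a u)
    have hu : (P.part a).erase a = u := by rw [hpart, erase_insert hau]
    refine Sigma.ext hu (heq_of_parts_eq (by dsimp only; rw [hu]) ?_)
    rw [avoidPart_parts, hpart, hP, erase_insert hQ]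
  · intro P _
    ext b
    rw [extend_parts, avoidPart_parts,
      insert_erase (P.mem_part ha), insert_erase (P.part_mem.2 ha)]
  · rintro ⟨u, Q⟩ -
    have hQ : insert a u ∉ Q.parts := fun h => by simpa using Q.le h (mem_insert_self a u)
    rw [extend_parts, prod_insert hQ]

theorem sum_prod_card_parts_eq {R : Type*} [CommSemiring R] (w T : ℕ → R) (h0 : T 0 = 1)
    (hrec : ∀ N ≠ 0, ∑ c ∈ range N, (N - 1).choose c • (w (c + 1) * T (N - 1 - c)) = T N)
    (s : Finset β) : ∑ P : Finpartition s, ∏ b ∈ P.parts, w #b = T #s := by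
  induction s using Finset.strongInduction with
  | H s ih =>
  rcases s.eq_empty_or_nonempty with rfl | ⟨a, ha⟩
  · rw [sum_prod_parts_empty, card_empty, h0]
  rw [sum_prod_parts_eq_sum_powerset _ ha]
  have hsplit : ∀ u ∈ (s.erase a).powerset,
      w #(insert a u) * ∑ Q : Finpartition (s \ insert a u), ∏ b ∈ Q.parts, w #b =
        w (#u + 1) * T (#s - 1 - #u) := by
    intro u hu
    have hus : u ⊆ s.erase a := mem_powerset.1 hu
    have hau : a ∉ u := fun h => (mem_erase.1 (hus h)).1 rfl
    have hsub : insert a u ⊆ s := insert_subset ha (hus.trans (erase_subset _ _))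
    rw [ih _ (sdiff_ssubset hsub (insert_nonempty _ _)), card_sdiff_of_subset hsub,
      card_insert_of_notMem hau, Nat.sub_add_eq, Nat.sub_right_comm]
  rw [sum_congr rfl hsplit, sum_powerset,
    sum_congr rfl fun c _ => sum_powersetCard c _ fun d => w (d + 1) * T (#s - 1 - d),
    card_erase_of_mem ha, Nat.sub_add_cancel (card_pos.2 ⟨a, ha⟩),
    hrec _ (card_ne_zero_of_mem ha)]

end Finpartition

lemma mul_sum_risingFactorial_div_factorial (x : ℝ) (m : ℕ) :
    x * ∑ i ∈ range m, risingFactorial x i / i ! = m * (risingFactorial x m / m !) := by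
  induction m with
  | zero => simp
  | succ m ih =>
    rw [sum_range_succ, mul_add, ih]
    simp only [risingFactorial, prod_range_succ, factorial_succ]
    push_cast
    field_simp
    ring

lemma Finset.sum_range_mul_eq_sum_of_dvd {M : Type*} [AddCommMonoid M] {k : ℕ} (hk : 0 < k) (m : ℕ)
    {f : ℕ → M} (hf : ∀ c, ¬k ∣ c + 1 → f c = 0) :
    ∑ c ∈ range (m * k), f c = ∑ j ∈ range m, f (j * k + (k - 1)) := by
  have hinj : Set.InjOn (fun j => j * k + (k - 1)) (range m) := fun i _ j _ h =>
    Nat.eq_of_mul_eq_mul_right hk (Nat.add_right_cancel h)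
  rw [← sum_image hinj]
  refine (sum_subset ?_ fun c hcm hc => hf c fun hdvd => hc ?_).symm
  · intro c hc
    obtain ⟨j, hj, rfl⟩ := mem_image.1 hc
    have := Nat.mul_le_mul_right k (mem_range.1 hj)
    exact mem_range.2 (by rw [Nat.succ_mul] at this; omega)
  · obtain ⟨j, hj⟩ := hdvd
    have hc_lt := mem_range.1 hcm
    have hj0 : j ≠ 0 := by rintro rfl; omega
    have hjm : j ≤ m := Nat.le_of_mul_le_mul_left (by rw [mul_comm k m]; omega) hk
    have hjk : (j - 1) * k + k = k * j := by
      rw [← Nat.succ_mul, Nat.succ_eq_add_one, Nat.sub_add_cancel (by omega), mul_comm]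
    exact mem_image.2 ⟨j - 1, mem_range.2 (by omega), by omega⟩

noncomputable def evenBlockWeight (k : ℕ) (α : ℝ) (d : ℕ) : ℝ :=
  if k ∣ d then α * (d - 1)! else 0

noncomputable def evenPartitionTotal (k : ℕ) (α : ℝ) (N : ℕ) : ℝ :=
  if k ∣ N then N ! / (N / k)! * risingFactorial (α / k) (N / k) else 0

variable {k : ℕ} (α : ℝ)

lemma choose_smul_evenBlockWeight_mul_evenPartitionTotal (hk : 0 < k) {j m : ℕ} (hj : j < m) :
    (m * k - 1).choose (j * k + (k - 1)) • (evenBlockWeight k α (j * k + (k - 1) + 1) *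
      evenPartitionTotal k α (m * k - 1 - (j * k + (k - 1)))) =
    (m * k - 1)! * (α * (risingFactorial (α / k) (m - 1 - j) / (m - 1 - j)!)) := by
  have hsplit : (m - 1 - j) * k + (j + 1) * k = m * k := by rw [← add_mul]; congr 1; omega
  have hjk : j * k + (k - 1) + 1 = (j + 1) * k := by rw [Nat.succ_mul]; omega
  have hrest : m * k - 1 - (j * k + (k - 1)) = (m - 1 - j) * k := by omega
  have hchoose := choose_mul_factorial_mul_factorial (show j * k + (k - 1) ≤ m * k - 1 by omega)
  rw [hrest] at hchoose
  rw [hjk, hrest, evenBlockWeight, evenPartitionTotal, if_pos (dvd_mul_left k _),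
    if_pos (dvd_mul_left k _), Nat.mul_div_cancel _ hk, nsmul_eq_mul, ← hjk, Nat.add_sub_cancel,
    ← hchoose]
  push_cast
  field_simp

lemma sum_choose_smul_evenPartitionTotal (hk : 0 < k) {N : ℕ} (hN : N ≠ 0) :
    ∑ c ∈ range N, (N - 1).choose c •
      (evenBlockWeight k α (c + 1) * evenPartitionTotal k α (N - 1 - c)) =
    evenPartitionTotal k α N := by
  by_cases hkN : k ∣ N
  · obtain ⟨m, rfl⟩ := hkN
    rw [mul_comm k m, sum_range_mul_eq_sum_of_dvd hk m fun c hc => by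
        rw [evenBlockWeight, if_neg hc, zero_mul, smul_zero],
      sum_congr rfl fun j hj =>
        choose_smul_evenBlockWeight_mul_evenPartitionTotal α hk (mem_range.1 hj),
      ← mul_sum, ← mul_sum, sum_range_reflect (fun i => risingFactorial (α / k) i / i !) m,
      evenPartitionTotal, if_pos (dvd_mul_left k m), Nat.mul_div_cancel _ hk]
    have hfac : ((m * k)! : ℝ) = (m * k : ℕ) * (m * k - 1)! := by
      rw [← Nat.cast_mul, Nat.mul_factorial_pred (mul_comm k m ▸ hN)]
    have hsum := mul_sum_risingFactorial_div_factorial (α / k) m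
    have hk' : (k : ℝ) ≠ 0 := by positivity
    rw [hfac]
    push_cast
    field_simp at hsum ⊢
    linear_combination hsum
  · rw [evenPartitionTotal, if_neg hkN]
    refine sum_eq_zero fun c hc => ?_
    rw [evenBlockWeight, evenPartitionTotal]
    split_ifs with hblock hrest
    · have := Nat.dvd_add hblock hrest
      rw [show c + 1 + (N - 1 - c) = N by have := mem_range.1 hc; omega] at this
      exact absurd this hkN
    all_goals simp

lemma prod_evenBlockWeight {β : Type*} (t : Finset (Finset β)) :
    ∏ b ∈ t, evenBlockWeight k α #b =
      if ∀ b ∈ t, k ∣ #b then α ^ #t * ∏ b ∈ t, ((#b - 1)! : ℝ) else 0 := by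
  simp only [evenBlockWeight]
  rw [prod_ite_zero, prod_mul_distrib, prod_const]

theorem even_partition_identity_general (n k : ℕ) (hk : 1 ≤ k) (α : ℝ) :
    ∑ π ∈ (Finset.univ : Finset (Finpartition (Finset.univ : Finset (Fin (n * k))))).filter
        (fun π => IsEven k π),
      α ^ π.parts.card * ∏ b ∈ π.parts, (Nat.factorial (b.card - 1) : ℝ) =
    ((Nat.factorial (n * k) : ℝ) / (Nat.factorial n : ℝ)) * risingFactorial (α / k) n := by
  have hsum := Finpartition.sum_prod_card_parts_eq (evenBlockWeight k α) (evenPartitionTotal k α)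
    (by simp [evenPartitionTotal, risingFactorial])
    (fun _ hN => sum_choose_smul_evenPartitionTotal α hk hN)
    (univ : Finset (Fin (n * k)))
  rw [Finset.card_univ, Fintype.card_fin, evenPartitionTotal, if_pos (dvd_mul_left k n),
    Nat.mul_div_cancel _ hk] at hsum
  rw [← hsum, sum_filter]
  exact sum_congr rfl fun π _ => by rw [prod_evenBlockWeight]; congr

/-- The combinatorial identity for even partitions:
`∑_{π ∈ P_{[nk]:k}} α^{#π} ∏_{b∈π} (#b−1)! = [(nk)!/n!]·(α/k)^{↑n}`. -/
theorem even_partition_identity (n k : ℕ) (hn : 1 ≤ n) (hk : 1 ≤ k) (α : ℝ) :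
    ∑ π ∈ (Finset.univ : Finset (Finpartition (Finset.univ : Finset (Fin (n * k))))).filter
        (fun π => IsEven k π),
      α ^ π.parts.card * ∏ b ∈ π.parts, (Nat.factorial (b.card - 1) : ℝ) =
    ((Nat.factorial (n * k) : ℝ) / (Nat.factorial n : ℝ)) * risingFactorial (α / k) n :=
  even_partition_identity_general n k hk α
end

section
/- For all integers n ≥ 1 and k ≥ 1 and every real number α, the sum of α^{#σ} over all permutations σ of {1,…,nk} whose every cycle length is divisible by k equals [(nk)!/n!] · (α/k)^{↑n}, where #σ is the number of cycles of σ. (This is the permutation form of the even-partition identity, obtained since each k-even partition π corresponds to ∏_{b∈π} Γ(#b) permutations whose cycles are the blocks of π.) -/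
/-- The number of cycles of a permutation, fixed points counting as cycles of length 1. -/
def cycleCount {N : ℕ} (σ : Equiv.Perm (Fin N)) : ℕ :=
  σ.cycleType.card + (Finset.univ.filter fun i => σ i = i).card

/-!
Insert a new point `none` into a permutation `τ` of `α` (`Equiv.Perm.decomposeOption`): either
as a fixed point, or just before some `q` in the cycle of `q`, which lengthens that cycle by one
and keeps the number of cycles. Keeping track of how far the cycle through the new point is from
a multiple of `k` turns this into a recursion whose solution says that in a permutation of
`N + 1` points, all of whose cycles have length divisible by `k`, the cycle through a given point
has some length `s + 1` divisible by `k` and can be chosen in `N! / (N - s)!` ways. So the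
weighted sums `T N` satisfy `T (N + 1) = t ∑_{k ∣ s + 1} N! / (N - s)! * T (N - s)`, and the
closed form follows by strong induction from `x^{↑(m+1)} / m! = x ∑_{j ≤ m} x^{↑j} / j!`.
-/

open Equiv Finset Function

namespace Equiv.Perm

section SameCycle

variable {α β γ : Type*}

theorem SameCycle.map_of_step {σ : Perm α} {τ : Perm β} (g : α → β)
    (hg : ∀ x, τ.SameCycle (g x) (g (σ x))) {x y : α} (h : σ.SameCycle x y) :
    τ.SameCycle (g x) (g y) := by
  obtain ⟨i, rfl⟩ := h
  induction i using Int.induction_on with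
  | zero => exact SameCycle.refl _ _
  | succ i ih =>
    rw [add_comm, zpow_one_add, mul_apply]
    exact ih.trans (hg _)
  | pred i ih =>
    have := hg ((σ ^ (-(i : ℤ) - 1)) x)
    rw [← mul_apply, ← zpow_one_add, add_sub_cancel] at this
    exact ih.trans this.symm

theorem sameCycle_permCongr (e : α ≃ β) (σ : Perm α) {x y : α} :
    (e.permCongr σ).SameCycle (e x) (e y) ↔ σ.SameCycle x y := by
  refine ⟨fun h => ?_, SameCycle.map_of_step e fun z => ⟨1, by simp [permCongr_apply]⟩⟩
  simpa using h.map_of_step e.symm fun z => ⟨1, by simp [permCongr_apply]⟩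

noncomputable def numCycles (σ : Perm α) : ℕ :=
  Nat.card (Quotient (SameCycle.setoid σ))

theorem numCycles_eq_card_range {σ : Perm α} (f : α → γ)
    (hf : ∀ x y, σ.SameCycle x y ↔ f x = f y) : σ.numCycles = Nat.card (Set.range f) := by
  have : SameCycle.setoid σ = Setoid.ker f := Setoid.ext hf
  rw [numCycles, this]
  exact Nat.card_congr (Setoid.quotientKerEquivRange f)

theorem numCycles_eq_card_of_surjective {σ : Perm α} (f : α → γ) (hsurj : Surjective f)
    (hf : ∀ x y, σ.SameCycle x y ↔ f x = f y) : σ.numCycles = Nat.card γ := by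
  rw [numCycles_eq_card_range f hf, hsurj.range_eq, Nat.card_univ]

theorem numCycles_permCongr (e : α ≃ β) (σ : Perm α) :
    (e.permCongr σ).numCycles = σ.numCycles :=
  numCycles_eq_card_of_surjective (Quotient.mk (SameCycle.setoid σ) ∘ e.symm)
    (Quotient.mk_surjective.comp e.symm.surjective) fun x y => by
      rw [comp_apply, comp_apply, Quotient.eq]
      change _ ↔ σ.SameCycle _ _
      rw [← sameCycle_permCongr e, apply_symm_apply, apply_symm_apply]

end SameCycle

section Fintype

variable {α β : Type*} [Fintype α] [DecidableEq α] [Fintype β] [DecidableEq β]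

def cycleLen (σ : Perm α) (x : α) : ℕ :=
  Fintype.card {y // σ.SameCycle x y}

theorem cycleLen_eq_of_sameCycle {σ : Perm α} {x y : α} (h : σ.SameCycle x y) :
    σ.cycleLen x = σ.cycleLen y :=
  Fintype.card_congr <| Equiv.subtypeEquivRight fun _ => ⟨h.symm.trans, h.trans⟩

theorem cycleLen_permCongr (e : α ≃ β) (σ : Perm α) (x : α) :
    (e.permCongr σ).cycleLen (e x) = σ.cycleLen x := by
  refine Fintype.card_congr (e.subtypeEquiv fun y => ?_).symm
  exact (sameCycle_permCongr e σ).symm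

theorem cycleLen_option (σ : Perm (Option α)) (a : Option α) :
    σ.cycleLen a =
      (if σ.SameCycle a none then 1 else 0) + Fintype.card {y // σ.SameCycle a (some y)} := by
  simp only [cycleLen, Fintype.card_subtype, card_filter, Fintype.sum_option]

theorem numCycles_eq_card_cycleType_add (σ : Perm α) :
    σ.numCycles = σ.cycleType.card + #{x | σ x = x} := by
  let g : α → Perm α ⊕ α := fun x => if x ∈ σ.support then .inl (σ.cycleOf x) else .inr x
  have hg : ∀ x y, σ.SameCycle x y ↔ g x = g y := by
    intro x y
    by_cases hx : x ∈ σ.support <;> by_cases hy : y ∈ σ.support <;>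
      simp only [g, hx, hy, if_true, if_false, Sum.inl.injEq, Sum.inr.injEq, reduceCtorEq,
        iff_false]
    · exact sameCycle_iff_cycleOf_eq_of_mem_support hx hy
    · exact fun h => hy (by rwa [← h.eq_of_right (notMem_support.mp hy)])
    · exact fun h => hx (by rwa [h.eq_of_left (notMem_support.mp hx)])
    · exact ⟨fun h => h.eq_of_left (notMem_support.mp hx), fun h => h ▸ SameCycle.refl _ _⟩
  have himage : univ.image g = σ.cycleFactorsFinset.disjSum {x | σ x = x} := by
    ext (c | y)
    · simp only [mem_image, mem_univ, true_and, inl_mem_disjSum, g]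
      constructor
      · rintro ⟨x, hx⟩
        split_ifs at hx with hxs
        exact Sum.inl_injective hx ▸ cycleOf_mem_cycleFactorsFinset_iff.mpr hxs
      · intro hc
        obtain ⟨a, ha⟩ := (mem_cycleFactorsFinset_iff.mp hc).1.nonempty_support
        refine ⟨a, ?_⟩
        rw [if_pos (mem_cycleFactorsFinset_support_le hc ha), cycle_is_cycleOf ha hc]
    · simp only [mem_image, mem_univ, true_and, inr_mem_disjSum, mem_filter, g]
      constructor
      · rintro ⟨x, hx⟩
        split_ifs at hx with hxs
        exact Sum.inr_injective hx ▸ notMem_support.mp hxs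
      · exact fun hy => ⟨y, by rw [if_neg (notMem_support.mpr hy)]⟩
  rw [numCycles_eq_card_range g hg, Nat.card_eq_card_toFinset, Set.toFinset_range, himage,
    card_disjSum, cycleType_def, Multiset.card_map, card_val]

end Fintype

section Option

variable {α : Type*} (τ : Perm α)

theorem sameCycle_optionCongr_none {b : Option α} :
    SameCycle (optionCongr τ) none b ↔ b = none :=
  ⟨fun h => (h.eq_of_left rfl).symm, fun h => h ▸ SameCycle.refl _ _⟩

theorem sameCycle_optionCongr_some {x y : α} :
    SameCycle (optionCongr τ) (some x) (some y) ↔ τ.SameCycle x y := by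
  refine ⟨fun h => ?_, SameCycle.map_of_step some fun z => ⟨1, rfl⟩⟩
  refine h.map_of_step (·.getD x) fun o => ?_
  cases o with
  | none => exact SameCycle.refl _ _
  | some z => exact ⟨1, by simp⟩

theorem numCycles_optionCongr [Finite α] : numCycles (optionCongr τ) = τ.numCycles + 1 := by
  rw [numCycles_eq_card_of_surjective (Option.map (Quotient.mk (SameCycle.setoid τ)))
    (by rintro (_ | c); exacts [⟨none, rfl⟩, ⟨some c.out, by simp⟩]), Finite.card_option,
    numCycles]
  rintro (_ | x) (_ | y)
  · simp [SameCycle.refl]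
  · simp [sameCycle_optionCongr_none]
  · simp [sameCycle_comm (x := some x), sameCycle_optionCongr_none]
  · simp only [sameCycle_optionCongr_some, Option.map_some, Option.some_inj, Quotient.eq]
    rfl

variable [DecidableEq α] (q : α)

theorem swap_none_mul_optionCongr_apply_some (x : α) :
    (swap none (some q) * optionCongr τ) (some x) = if τ x = q then none else some (τ x) := by
  split_ifs with h
  · simp [h]
  · simp [swap_apply_of_ne_of_ne, h]

/-- `none` sits in the cycle of `q`, just before `q`; `Option.getD q` collapses it onto `q`. -/
theorem sameCycle_swap_none_mul_optionCongr {a b : Option α} :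
    (swap none (some q) * optionCongr τ).SameCycle a b ↔ τ.SameCycle (a.getD q) (b.getD q) := by
  set σ := swap none (some q) * optionCongr τ
  have hnone : σ none = some q := by simp [σ]
  constructor
  · refine fun h => h.map_of_step (·.getD q) fun o => ?_
    cases o with
    | none => rw [hnone]; exact SameCycle.refl _ _
    | some z =>
      refine ⟨1, ?_⟩
      rw [swap_none_mul_optionCongr_apply_some]
      split_ifs with hz <;> simp [hz]
  · have hsome : ∀ {u v}, τ.SameCycle u v → σ.SameCycle (some u) (some v) := by
      refine SameCycle.map_of_step some fun z => ?_
      by_cases hz : τ z = q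
      · have h₁ : σ (some z) = none := by rw [swap_none_mul_optionCongr_apply_some, if_pos hz]
        exact SameCycle.trans (y := none) ⟨1, by simpa using h₁⟩
          ⟨1, by rw [zpow_one, hnone, hz]⟩
      · exact ⟨1, by rw [zpow_one, swap_none_mul_optionCongr_apply_some, if_neg hz]⟩
    have hgetD : ∀ a, σ.SameCycle a (some (a.getD q)) := fun a => by
      cases a with
      | none => exact ⟨1, by simpa using hnone⟩
      | some x => exact SameCycle.refl _ _
    exact fun h => (hgetD a).trans ((hsome h).trans (hgetD b).symm)

theorem numCycles_swap_none_mul_optionCongr :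
    (swap none (some q) * optionCongr τ).numCycles = τ.numCycles :=
  numCycles_eq_card_of_surjective (Quotient.mk (SameCycle.setoid τ) ∘ (·.getD q))
    (Quotient.mk_surjective.comp fun y => ⟨some y, rfl⟩) fun a b => by
      rw [sameCycle_swap_none_mul_optionCongr, comp_apply, comp_apply, Quotient.eq]
      rfl

end Option

section FintypeOption

variable {α : Type*} [Fintype α] [DecidableEq α] (τ : Perm α)

theorem cycleLen_optionCongr_none : cycleLen (optionCongr τ) none = 1 := by
  simp [cycleLen_option, sameCycle_optionCongr_none]

theorem cycleLen_optionCongr_some (x : α) :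
    cycleLen (optionCongr τ) (some x) = τ.cycleLen x := by
  rw [cycleLen_option, if_neg fun h => by simpa using (sameCycle_optionCongr_none τ).mp h.symm,
    zero_add]
  simp only [sameCycle_optionCongr_some]
  rfl

variable (q : α)

theorem cycleLen_swap_none_mul_optionCongr (a : Option α) :
    (swap none (some q) * optionCongr τ).cycleLen a =
      (if τ.SameCycle (a.getD q) q then 1 else 0) + τ.cycleLen (a.getD q) := by
  simp only [cycleLen_option, sameCycle_swap_none_mul_optionCongr, Option.getD_none,
    Option.getD_some]
  rfl

end FintypeOption

section IsMarkedEven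

variable {α β : Type*} [Fintype α] [DecidableEq α] [Fintype β] [DecidableEq β] (k r : ℕ)

/-- `r` is how far the cycle through `p` falls short of a multiple of `k`: inserting a new point
into that cycle turns the defect `r + 1` into `r`. -/
def IsMarkedEven (p : α) (σ : Perm α) : Prop :=
  k ∣ σ.cycleLen p + r ∧ ∀ x, ¬σ.SameCycle p x → k ∣ σ.cycleLen x

instance (p : α) : DecidablePred (IsMarkedEven k r p) :=
  fun _ => inferInstanceAs (Decidable (_ ∧ _))

variable {k r}

theorem isMarkedEven_zero_iff {p : α} {σ : Perm α} :
    σ.IsMarkedEven k 0 p ↔ ∀ x, k ∣ σ.cycleLen x := by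
  refine ⟨fun ⟨hp, hrest⟩ x => ?_, fun h => ⟨h p, fun x _ => h x⟩⟩
  by_cases hx : σ.SameCycle p x
  · exact cycleLen_eq_of_sameCycle hx ▸ hp
  · exact hrest x hx

theorem isMarkedEven_permCongr_iff (e : α ≃ β) {p : α} {σ : Perm α} :
    (e.permCongr σ).IsMarkedEven k r (e p) ↔ σ.IsMarkedEven k r p := by
  simp only [IsMarkedEven, ← e.forall_congr_right (q := fun y => ¬_ → k ∣ cycleLen _ y),
    sameCycle_permCongr, cycleLen_permCongr]

theorem isMarkedEven_optionCongr_iff {τ : Perm α} :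
    IsMarkedEven k r none (optionCongr τ) ↔ k ∣ 1 + r ∧ ∀ x, k ∣ τ.cycleLen x := by
  simp only [IsMarkedEven, cycleLen_optionCongr_none, Option.forall, sameCycle_optionCongr_none,
    cycleLen_optionCongr_some, reduceCtorEq, not_true_eq_false, not_false_eq_true, forall_const,
    IsEmpty.forall_iff, true_and]

theorem isMarkedEven_swap_none_mul_optionCongr_iff {τ : Perm α} {q : α} :
    (swap none (some q) * optionCongr τ).IsMarkedEven k r none ↔
      τ.IsMarkedEven k (r + 1) q := by
  simp only [IsMarkedEven, cycleLen_swap_none_mul_optionCongr, Option.forall,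
    sameCycle_swap_none_mul_optionCongr, Option.getD_none, Option.getD_some, SameCycle.refl,
    if_true, not_true_eq_false, IsEmpty.forall_iff, true_and]
  refine and_congr (by rw [add_comm 1, add_right_comm, add_assoc]) (forall_congr' fun y => ?_)
  refine imp_congr_right fun hy => ?_
  rw [if_neg fun h => hy h.symm, zero_add]

end IsMarkedEven

end Equiv.Perm

section EvenCycleSums

open Equiv.Perm

variable (k r : ℕ) (t : ℝ) {α β : Type*} [Fintype α] [DecidableEq α] [Fintype β]
  [DecidableEq β]

variable (α) in
noncomputable def evenCycleSum : ℝ :=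
  ∑ σ : Perm α with ∀ x, k ∣ σ.cycleLen x, t ^ σ.numCycles

noncomputable def markedEvenCycleSum (p : α) : ℝ :=
  ∑ σ : Perm α with σ.IsMarkedEven k r p, t ^ σ.numCycles

theorem markedEvenCycleSum_congr (e : α ≃ β) (p : α) :
    markedEvenCycleSum k r t (e p) = markedEvenCycleSum k r t p := by
  refine (sum_equiv e.permCongr (fun σ => ?_) fun σ _ => by rw [numCycles_permCongr]).symm
  simp only [mem_filter, mem_univ, true_and, isMarkedEven_permCongr_iff]

theorem markedEvenCycleSum_zero (p : α) : markedEvenCycleSum k 0 t p = evenCycleSum k t α := by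
  simp only [markedEvenCycleSum, evenCycleSum, isMarkedEven_zero_iff]

theorem sum_markedEvenCycleSum (p : α) :
    ∑ q : α, markedEvenCycleSum k r t q = Fintype.card α * markedEvenCycleSum k r t p := by
  have h (q : α) : markedEvenCycleSum k r t q = markedEvenCycleSum k r t p := by
    simpa using markedEvenCycleSum_congr k r t (swap p q) p
  simp [h]

theorem markedEvenCycleSum_none :
    markedEvenCycleSum k r t (none : Option α) =
      (if k ∣ 1 + r then t * evenCycleSum k t α else 0) +
        ∑ q : α, markedEvenCycleSum k (r + 1) t q := by
  rw [markedEvenCycleSum, sum_filter, ← decomposeOption.symm.sum_comp, Fintype.sum_prod_type,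
    Fintype.sum_option]
  simp only [decomposeOption_symm_apply, swap_self, ← Perm.one_def, one_mul,
    isMarkedEven_optionCongr_iff, numCycles_optionCongr,
    isMarkedEven_swap_none_mul_optionCongr_iff, numCycles_swap_none_mul_optionCongr,
    markedEvenCycleSum, evenCycleSum, sum_filter]
  congr 1
  split_ifs with h
  · simp only [h, true_and, mul_sum, mul_ite, mul_zero, pow_succ']
  · simp [h]

end EvenCycleSums

theorem Finset.sum_range_mul_filter_dvd {M : Type*} [AddCommMonoid M] {k : ℕ} (hk : 0 < k)
    (m : ℕ) (f : ℕ → M) :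
    ∑ u ∈ range (m * k) with k ∣ u, f u = ∑ j ∈ range m, f (j * k) := by
  have : {u ∈ range (m * k) | k ∣ u} = (range m).image (· * k) := by
    ext u
    simp only [mem_filter, mem_range, mem_image]
    constructor
    · rintro ⟨hu, j, rfl⟩
      exact ⟨j, Nat.lt_of_mul_lt_mul_right (by rwa [mul_comm k j] at hu), mul_comm j k⟩
    · rintro ⟨j, hj, rfl⟩
      exact ⟨Nat.mul_lt_mul_of_pos_right hj hk, dvd_mul_left k j⟩
  rw [this, sum_image fun _ _ _ _ h => Nat.eq_of_mul_eq_mul_right hk h]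

open Nat in
theorem risingFactorial_succ_div_factorial (x : ℝ) (m : ℕ) :
    risingFactorial x (m + 1) / m ! = x * ∑ j ∈ range (m + 1), risingFactorial x j / j ! := by
  induction m with
  | zero => simp [risingFactorial]
  | succ m ih =>
    rw [sum_range_succ, mul_add, ← ih, risingFactorial, prod_range_succ, ← risingFactorial,
      factorial_succ]
    push_cast
    field_simp
    ring

section Fin

open Equiv.Perm Nat

variable (k : ℕ) (t : ℝ)

theorem markedEvenCycleSum_fin_zero (N r : ℕ) :
    markedEvenCycleSum k r t (0 : Fin (N + 1)) =
      (if k ∣ 1 + r then t * evenCycleSum k t (Fin N) else 0) +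
        ∑ q : Fin N, markedEvenCycleSum k (r + 1) t q := by
  rw [← finSuccEquiv_symm_none, markedEvenCycleSum_congr, markedEvenCycleSum_none]

theorem markedEvenCycleSum_fin_zero_eq_sum (N r : ℕ) :
    markedEvenCycleSum k r t (0 : Fin (N + 1)) =
      ∑ u ∈ range (N + 1),
        if k ∣ N - u + 1 + r then (N ! / u ! : ℝ) * t * evenCycleSum k t (Fin u) else 0 := by
  induction N generalizing r with
  | zero => simp [markedEvenCycleSum_fin_zero, add_comm]
  | succ N ih =>
    rw [markedEvenCycleSum_fin_zero, sum_markedEvenCycleSum k (r + 1) t 0, ih,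
      sum_range_succ _ (N + 1), add_comm, Fintype.card_fin, mul_sum]
    congr 1
    · refine sum_congr rfl fun u hu => ?_
      rw [show N + 1 - u + 1 + r = N - u + 1 + (r + 1) by grind]
      split_ifs
      · rw [factorial_succ]
        push_cast
        ring
      · simp
    · simp [add_comm, (N + 1).factorial_ne_zero]

theorem evenCycleSum_fin_succ (N : ℕ) :
    evenCycleSum k t (Fin (N + 1)) =
      ∑ u ∈ range (N + 1),
        if k ∣ N - u + 1 then (N ! / u ! : ℝ) * t * evenCycleSum k t (Fin u) else 0 := by
  rw [← markedEvenCycleSum_zero k t 0, markedEvenCycleSum_fin_zero_eq_sum]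

theorem evenCycleSum_fin_zero : evenCycleSum k t (Fin 0) = 1 := by
  simp [evenCycleSum, numCycles]

theorem evenCycleSum_fin_mul (hk : 0 < k) (n : ℕ) :
    evenCycleSum k t (Fin (n * k)) = (n * k)! / n ! * risingFactorial (t / k) n := by
  induction n using Nat.strong_induction_on with
  | _ n ih =>
  cases n with
  | zero => rw [Nat.zero_mul, evenCycleSum_fin_zero]; simp [risingFactorial]
  | succ m =>
  obtain ⟨N, hN⟩ : ∃ N, (m + 1) * k = N + 1 := ⟨(m + 1) * k - 1, by grind⟩
  have hdvd (u : ℕ) (hu : u ∈ range (N + 1)) : k ∣ N - u + 1 ↔ k ∣ u := by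
    have hsum : N - u + 1 + u = (m + 1) * k := by grind
    exact ⟨fun h => (Nat.dvd_add_right h).mp (hsum ▸ dvd_mul_left k _),
      fun h => (Nat.dvd_add_left h).mp (hsum ▸ dvd_mul_left k _)⟩
  calc evenCycleSum k t (Fin ((m + 1) * k))
      = ∑ u ∈ range ((m + 1) * k) with k ∣ u,
          (N ! / u ! : ℝ) * t * evenCycleSum k t (Fin u) := by
        rw [hN, evenCycleSum_fin_succ, sum_filter]
        exact sum_congr rfl fun u hu => if_congr (hdvd u hu) rfl rfl
    _ = ∑ j ∈ range (m + 1),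
          (N ! / (j * k)! : ℝ) * t * ((j * k)! / j ! * risingFactorial (t / k) j) := by
        rw [sum_range_mul_filter_dvd hk]
        exact sum_congr rfl fun j hj => by rw [ih j (mem_range.mp hj)]
    _ = N ! * k * (risingFactorial (t / k) (m + 1) / m !) := by
        rw [risingFactorial_succ_div_factorial, mul_sum, mul_sum]
        refine sum_congr rfl fun j _ => ?_
        field_simp
    _ = ((m + 1) * k)! / (m + 1)! * risingFactorial (t / k) (m + 1) := by
        have hNr : (N : ℝ) + 1 = (m + 1) * k := by exact_mod_cast hN.symm
        rw [hN, factorial_succ, factorial_succ]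
        push_cast
        rw [hNr]
        field_simp

end Fin

theorem even_permutation_identity_general (n k : ℕ) (hk : 1 ≤ k) (α : ℝ) :
    ∑ σ ∈ (Finset.univ : Finset (Equiv.Perm (Fin (n * k)))).filter
        (fun σ => ∀ x : Fin (n * k), k ∣ Fintype.card {y : Fin (n * k) // σ.SameCycle x y}),
      α ^ cycleCount σ =
    ((Nat.factorial (n * k) : ℝ) / (Nat.factorial n : ℝ)) * risingFactorial (α / k) n := by
  simp only [cycleCount, ← Equiv.Perm.numCycles_eq_card_cycleType_add]
  rw [← evenCycleSum_fin_mul k α hk n, evenCycleSum]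
  -- the two filters differ only in their `Decidable` instances
  congr

/-- The permutation form of the even-partition identity: the sum of `α^{#σ}` over all
permutations of `{1,…,nk}` each of whose cycle lengths (the cycle length of `x` being the
size of its orbit, so fixed points have cycle length 1) is divisible by `k` equals
`[(nk)!/n!]·(α/k)^{↑n}`. -/
theorem even_permutation_identity (n k : ℕ) (hn : 1 ≤ n) (hk : 1 ≤ k) (α : ℝ) :
    ∑ σ ∈ (Finset.univ : Finset (Equiv.Perm (Fin (n * k)))).filter
        (fun σ => ∀ x : Fin (n * k), k ∣ Fintype.card {y : Fin (n * k) // σ.SameCycle x y}),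
      α ^ cycleCount σ =
    ((Nat.factorial (n * k) : ℝ) / (Nat.factorial n : ℝ)) * risingFactorial (α / k) n :=
  even_permutation_identity_general n k hk α
end
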